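/- arXiv:2304.12593 — 5 statements merged into one kernel-verified Lean document; each statement's English description precedes it below -/
import Mathlib

section
/- Let K be a field of characteristic 0, A an associative K-algebra, and n ≥ 1. Equip B = Aⁿ with the multiplication ((a₁,…,aₙ)(b₁,…,bₙ))_k = ∑_{1 ≤ j ≤ k−1} a_k b_j + ∑_{1 ≤ i ≤ k−1} a_i b_k + a_k b_k for each 1 ≤ k ≤ n. Then B is an associative K-algebra; moreover, with the A-actions a·(a₁,…,aₙ) = (aa₁,…,aaₙ) and (a₁,…,aₙ)·a = (a₁a,…,aₙa), B is an associative A-bimodule, and the average map P : B → A, P(a₁,…,aₙ) = (a₁ + ⋯ + aₙ)/n, is a relative averaging operator of weight 1/n. -/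
/-- The multiplication on `B = Aⁿ` from STATEMENT 7:
`((a₁,…,aₙ)(b₁,…,bₙ))_k = ∑_{j<k} a_k b_j + ∑_{i<k} a_i b_k + a_k b_k`. -/
def stmt7Mul {A : Type*} [NonUnitalRing A] {n : ℕ} (x y : Fin n → A) : Fin n → A :=
  fun k =>
    (∑ j ∈ Finset.univ.filter (fun j => j < k), x k * y j) +
      (∑ i ∈ Finset.univ.filter (fun i => i < k), x i * y k) + x k * y k

open Finset in
lemma stmt7_partial_key {A : Type*} [NonUnitalRing A] {n : ℕ}
    (s : Finset (Fin n)) (hs : ∀ i ∈ s, ∀ j, j < i → j ∈ s) (x y : Fin n → A) :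
    ∑ i ∈ s, stmt7Mul x y i = (∑ i ∈ s, x i) * (∑ i ∈ s, y i) := by
  have hfilt : ∀ i ∈ s, Finset.univ.filter (fun j => j < i) = s.filter (fun j => j < i) := by
    intro i hi
    ext j
    simp only [mem_filter, mem_univ, true_and]
    exact ⟨fun h => ⟨hs i hi j h, h⟩, fun h => h.2⟩
  rw [Finset.sum_mul_sum]
  have hsplit : ∀ i ∈ s, ∑ j ∈ s, x i * y j
      = ∑ j ∈ s.filter (fun j => j < i), x i * y j
        + ∑ j ∈ s.filter (fun j => ¬ j < i), x i * y j :=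
    fun i _ => (Finset.sum_filter_add_sum_filter_not s _ _).symm
  rw [Finset.sum_congr rfl hsplit, Finset.sum_add_distrib]
  have hswap : ∑ i ∈ s, ∑ j ∈ s.filter (fun j => ¬ j < i), x i * y j
      = ∑ j ∈ s, ∑ i ∈ s.filter (fun i => ¬ j < i), x i * y j := by
    simp only [Finset.sum_filter]
    exact Finset.sum_comm
  rw [hswap]
  have hins : ∀ j ∈ s, s.filter (fun i => ¬ j < i) = insert j (s.filter (fun i => i < j)) := by
    intro j hj
    ext i
    simp only [mem_filter, mem_insert, not_lt]
    constructor
    · rintro ⟨hi, hij⟩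
      rcases lt_or_eq_of_le hij with h | h
      · exact Or.inr ⟨hi, h⟩
      · exact Or.inl h
    · rintro (rfl | ⟨hi, hij⟩)
      · exact ⟨hj, le_refl _⟩
      · exact ⟨hi, le_of_lt hij⟩
  have h2 : ∀ j ∈ s, ∑ i ∈ s.filter (fun i => ¬ j < i), x i * y j
      = x j * y j + ∑ i ∈ s.filter (fun i => i < j), x i * y j := by
    intro j hj
    rw [hins j hj, Finset.sum_insert (by simp)]
  rw [Finset.sum_congr rfl h2, Finset.sum_add_distrib]
  unfold stmt7Mul
  rw [Finset.sum_congr rfl (fun i hi => by rw [hfilt i hi])]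
  simp only [Finset.sum_add_distrib, Finset.mul_sum, Finset.sum_mul]
  abel

lemma stmt7_lt_key {A : Type*} [NonUnitalRing A] {n : ℕ} (k : Fin n) (x y : Fin n → A) :
    ∑ i ∈ Finset.univ.filter (fun i => i < k), stmt7Mul x y i
      = (∑ i ∈ Finset.univ.filter (fun i => i < k), x i)
        * (∑ i ∈ Finset.univ.filter (fun i => i < k), y i) := by
  apply stmt7_partial_key
  intro i hi j hj
  simp only [Finset.mem_filter, Finset.mem_univ, true_and] at *
  exact hj.trans hi

lemma stmt7_key {A : Type*} [NonUnitalRing A] {n : ℕ} (x y : Fin n → A) :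
    ∑ i, stmt7Mul x y i = (∑ i, x i) * (∑ i, y i) :=
  stmt7_partial_key Finset.univ (by simp) x y

lemma stmt7Mul_apply {A : Type*} [NonUnitalRing A] {n : ℕ} (x y : Fin n → A) (k : Fin n) :
    stmt7Mul x y k
      = x k * (∑ j ∈ Finset.univ.filter (fun j => j < k), y j)
        + (∑ i ∈ Finset.univ.filter (fun i => i < k), x i) * y k + x k * y k := by
  unfold stmt7Mul
  rw [← Finset.mul_sum, ← Finset.sum_mul]


/-- with the multiplication `stmt7Mul`, `B = Aⁿ` is an associative
algebra; with the componentwise `A`-actions it is an associative `A`-bimodule, and the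
average map `P(a₁,…,aₙ) = (a₁ + ⋯ + aₙ)/n` is a relative averaging operator of
weight `1/n`. -/
theorem average_map_relative_averaging_weight_inv_n
    {K A : Type*} [Field K] [CharZero K] [NonUnitalRing A] [Module K A]
    [IsScalarTower K A A] [SMulCommClass K A A]
    (n : ℕ) (hn : 1 ≤ n) :
    -- B is an associative algebra:
    (∀ x y z : Fin n → A, stmt7Mul (stmt7Mul x y) z = stmt7Mul x (stmt7Mul y z)) ∧
    -- B is an associative A-bimodule:
    (∀ a b : A, ∀ x : Fin n → A,
      (fun k => (a * b) * x k) = (fun k => a * (b * x k))) ∧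
    (∀ a b : A, ∀ x : Fin n → A,
      (fun k => (a * x k) * b) = (fun k => a * (x k * b))) ∧
    (∀ a b : A, ∀ x : Fin n → A,
      (fun k => (x k * a) * b) = (fun k => x k * (a * b))) ∧
    (∀ a : A, ∀ x y : Fin n → A,
      stmt7Mul x (fun k => y k * a) = (fun k => stmt7Mul x y k * a)) ∧
    (∀ a : A, ∀ x y : Fin n → A,
      stmt7Mul (fun k => x k * a) y = stmt7Mul x (fun k => a * y k)) ∧
    (∀ a : A, ∀ x y : Fin n → A,
      stmt7Mul (fun k => a * x k) y = (fun k => a * stmt7Mul x y k)) ∧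
    -- P is a relative averaging operator of weight 1/n:
    (∀ x y : Fin n → A,
      ((n : K)⁻¹ • ∑ i : Fin n, (LinearMap.proj i : (Fin n → A) →ₗ[K] A)) x *
          ((n : K)⁻¹ • ∑ i : Fin n, (LinearMap.proj i : (Fin n → A) →ₗ[K] A)) y =
        ((n : K)⁻¹ • ∑ i : Fin n, (LinearMap.proj i : (Fin n → A) →ₗ[K] A))
          (fun k =>
            ((n : K)⁻¹ • ∑ i : Fin n, (LinearMap.proj i : (Fin n → A) →ₗ[K] A)) x *
              y k) ∧
      ((n : K)⁻¹ • ∑ i : Fin n, (LinearMap.proj i : (Fin n → A) →ₗ[K] A)) x *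
          ((n : K)⁻¹ • ∑ i : Fin n, (LinearMap.proj i : (Fin n → A) →ₗ[K] A)) y =
        ((n : K)⁻¹ • ∑ i : Fin n, (LinearMap.proj i : (Fin n → A) →ₗ[K] A))
          (fun k =>
            x k *
              ((n : K)⁻¹ • ∑ i : Fin n, (LinearMap.proj i : (Fin n → A) →ₗ[K] A)) y) ∧
      ((n : K)⁻¹ • ∑ i : Fin n, (LinearMap.proj i : (Fin n → A) →ₗ[K] A)) x *
          ((n : K)⁻¹ • ∑ i : Fin n, (LinearMap.proj i : (Fin n → A) →ₗ[K] A)) y =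
        (n : K)⁻¹ •
          ((n : K)⁻¹ • ∑ i : Fin n, (LinearMap.proj i : (Fin n → A) →ₗ[K] A))
            (stmt7Mul x y)) := by

  refine ⟨?_, ?_, ?_, ?_, ?_, ?_, ?_, ?_⟩
  · -- associativity
    intro x y z
    funext k
    rw [stmt7Mul_apply (stmt7Mul x y) z, stmt7Mul_apply x (stmt7Mul y z),
      stmt7_lt_key, stmt7_lt_key, stmt7Mul_apply x y, stmt7Mul_apply y z]
    generalize x k = a
    generalize y k = b
    generalize z k = c
    generalize (∑ i ∈ Finset.univ.filter (fun i => i < k), x i) = p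
    generalize (∑ i ∈ Finset.univ.filter (fun i => i < k), y i) = q
    generalize (∑ i ∈ Finset.univ.filter (fun i => i < k), z i) = r
    noncomm_ring
  · intro a b x; funext k; rw [mul_assoc]
  · intro a b x; funext k; rw [mul_assoc]
  · intro a b x; funext k; rw [mul_assoc]
  · intro a x y
    funext k
    simp only [stmt7Mul, add_mul, Finset.sum_mul, mul_assoc]
  · intro a x y
    funext k
    simp only [stmt7Mul, mul_assoc]
  · intro a x y
    funext k
    simp only [stmt7Mul, mul_add, Finset.mul_sum, mul_assoc]
  · intro x y
    simp only [LinearMap.smul_apply, LinearMap.coe_sum, Finset.sum_apply,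
      LinearMap.proj_apply]
    refine ⟨?_, ?_, ?_⟩
    · rw [← Finset.mul_sum, mul_smul_comm]
    · rw [← Finset.sum_mul, smul_mul_assoc]
    · rw [stmt7_key, smul_mul_assoc, mul_smul_comm]
end

section
/- Let K be a field of characteristic 0, let A and B be K-vector spaces equipped with K-bilinear maps μ : A × A → A, ν : B × B → B, l : A × B → B, r : B × A → B, and let λ ∈ K with λ ≠ 0. Define three bilinear operations on the direct sum A ⊕ B by (a,x) ⊣ (b,y) = (μ(a,b), r(x,b)), (a,x) ⊢ (b,y) = (μ(a,b), l(a,y)), and (a,x) ⊥ (b,y) = (μ(a,b), λ·ν(x,y)). Then (A ⊕ B, ⊣, ⊢, ⊥) is a triassociative algebra if and only if μ is associative (so A is an associative algebra) and ν, l, r make B an associative A-bimodule: ν is associative and for all a,b ∈ A, x,y ∈ B one has l(μ(a,b),x) = l(a,l(b,x)), r(l(a,x),b) = l(a,r(x,b)), r(r(x,a),b) = r(x,μ(a,b)), r(ν(x,y),a) = ν(x,r(y,a)), ν(r(x,a),y) = ν(x,l(a,y)), ν(l(a,x),y) = l(a,ν(x,y)). -/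
/-- A triassociative algebra structure given by three binary operations. -/
def IsTriassociative {D : Type*} (dash vdash perp : D → D → D) : Prop :=
  ∀ x y z : D,
    dash (dash x y) z = dash x (dash y z) ∧
    dash (dash x y) z = dash x (vdash y z) ∧
    dash (vdash x y) z = vdash x (dash y z) ∧
    vdash (dash x y) z = vdash x (vdash y z) ∧
    vdash (vdash x y) z = vdash x (vdash y z) ∧
    dash (dash x y) z = dash x (perp y z) ∧
    dash (perp x y) z = perp x (dash y z) ∧
    perp (dash x y) z = perp x (vdash y z) ∧
    perp (vdash x y) z = vdash x (perp y z) ∧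
    vdash (perp x y) z = vdash x (vdash y z) ∧
    perp (perp x y) z = perp x (perp y z)

/-- the operations
`(a,x) ⊣ (b,y) = (μ(a,b), r(x,b))`, `(a,x) ⊢ (b,y) = (μ(a,b), l(a,y))`,
`(a,x) ⊥ (b,y) = (μ(a,b), λ·ν(x,y))` make `A ⊕ B` a triassociative algebra iff `μ` is
associative and `ν, l, r` make `B` an associative `A`-bimodule. -/
theorem direct_sum_triassociative_iff_bimodule
    {K A B : Type*} [Field K] [CharZero K]
    [AddCommGroup A] [Module K A] [AddCommGroup B] [Module K B]
    (μ : A →ₗ[K] A →ₗ[K] A) (ν : B →ₗ[K] B →ₗ[K] B)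
    (l : A →ₗ[K] B →ₗ[K] B) (r : B →ₗ[K] A →ₗ[K] B)
    (lam : K) (hlam : lam ≠ 0) :
    IsTriassociative (D := A × B)
        (fun p q => (μ p.1 q.1, r p.2 q.1))
        (fun p q => (μ p.1 q.1, l p.1 q.2))
        (fun p q => (μ p.1 q.1, lam • ν p.2 q.2)) ↔
      ((∀ a b c : A, μ (μ a b) c = μ a (μ b c)) ∧
        (∀ x y z : B, ν (ν x y) z = ν x (ν y z)) ∧
        (∀ a b : A, ∀ x : B, l (μ a b) x = l a (l b x)) ∧
        (∀ a b : A, ∀ x : B, r (l a x) b = l a (r x b)) ∧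
        (∀ a b : A, ∀ x : B, r (r x a) b = r x (μ a b)) ∧
        (∀ a : A, ∀ x y : B, r (ν x y) a = ν x (r y a)) ∧
        (∀ a : A, ∀ x y : B, ν (r x a) y = ν x (l a y)) ∧
        (∀ a : A, ∀ x y : B, ν (l a x) y = l a (ν x y))) := by

  constructor
  · intro h
    have hcan : ∀ u v : B, lam • u = lam • v → u = v := fun u v huv =>
      smul_right_injective B hlam huv
    refine ⟨?_, ?_, ?_, ?_, ?_, ?_, ?_, ?_⟩
    · intro a b c
      exact congrArg Prod.fst (h (a, 0) (b, 0) (c, 0)).1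
    · intro x y z
      have := congrArg Prod.snd (h ((0 : A), x) (0, y) (0, z)).2.2.2.2.2.2.2.2.2.2
      simp only [map_smul, LinearMap.smul_apply] at this
      exact hcan _ _ (hcan _ _ this)
    · intro a b x
      exact congrArg Prod.snd (h (a, 0) (b, 0) ((0 : A), x)).2.2.2.2.1
    · intro a b x
      exact congrArg Prod.snd (h (a, 0) ((0 : A), x) (b, 0)).2.2.1
    · intro a b x
      exact congrArg Prod.snd (h ((0 : A), x) (a, 0) (b, 0)).1
    · intro a x y
      have := congrArg Prod.snd (h ((0 : A), x) ((0 : A), y) (a, 0)).2.2.2.2.2.2.1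
      simp only [map_smul, LinearMap.smul_apply] at this
      exact hcan _ _ this
    · intro a x y
      have := congrArg Prod.snd (h ((0 : A), x) (a, 0) ((0 : A), y)).2.2.2.2.2.2.2.1
      simp only [map_smul, LinearMap.smul_apply] at this
      exact hcan _ _ this
    · intro a x y
      have := congrArg Prod.snd (h (a, 0) ((0 : A), x) ((0 : A), y)).2.2.2.2.2.2.2.2.1
      simp only [map_smul, LinearMap.smul_apply] at this
      exact hcan _ _ this
  · rintro ⟨h1, h2, h3, h4, h5, h6, h7, h8⟩ x y z
    refine ⟨?_, ?_, ?_, ?_, ?_, ?_, ?_, ?_, ?_, ?_, ?_⟩ <;>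
      refine Prod.ext (h1 _ _ _) ?_ <;>
      simp only [map_smul, LinearMap.smul_apply, h2, h3, h4, h5, h6, h7, h8, smul_smul,
        mul_comm]
end

section
/- Let K be a field of characteristic 0, A an associative K-algebra, B an associative A-bimodule, and λ ∈ K with λ ≠ 0. A K-linear map P : B → A is a relative averaging operator of weight λ if and only if the graph Gr(P) = {(P(x), x) : x ∈ B} ⊆ A ⊕ B is closed under each of the three operations ⊣, ⊢, ⊥ of the triassociative algebra A ⊕_λ B, i.e. Gr(P) is a triassociative subalgebra of A ⊕_λ B. -/
/-- `P : B → A` is a relative averaging operator of weight `lam ≠ 0` iff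
its graph is a triassociative subalgebra of `A ⊕_lam B`. -/
theorem relative_averaging_iff_graph_subalgebra
    {K A B : Type*} [Field K] [CharZero K]
    [NonUnitalRing A] [Module K A] [IsScalarTower K A A] [SMulCommClass K A A]
    [NonUnitalRing B] [Module K B] [IsScalarTower K B B] [SMulCommClass K B B]
    (l : A →ₗ[K] B →ₗ[K] B) (r : B →ₗ[K] A →ₗ[K] B)
    -- B is an associative A-bimodule:
    (h1 : ∀ a b : A, ∀ x : B, l (a * b) x = l a (l b x))
    (h2 : ∀ a b : A, ∀ x : B, r (l a x) b = l a (r x b))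
    (h3 : ∀ a b : A, ∀ x : B, r (r x a) b = r x (a * b))
    (h4 : ∀ a : A, ∀ x y : B, r (x * y) a = x * r y a)
    (h5 : ∀ a : A, ∀ x y : B, r x a * y = x * l a y)
    (h6 : ∀ a : A, ∀ x y : B, l a x * y = l a (x * y))
    (lam : K) (hlam : lam ≠ 0) (P : B →ₗ[K] A) :
    (∀ x y : B, P x * P y = P (l (P x) y) ∧ P x * P y = P (r x (P y)) ∧
        P x * P y = lam • P (x * y)) ↔
      (∀ p ∈ Set.range (fun x : B => ((P x, x) : A × B)),
        ∀ q ∈ Set.range (fun x : B => ((P x, x) : A × B)),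
          ((p.1 * q.1, r p.2 q.1) ∈ Set.range (fun x : B => ((P x, x) : A × B)) ∧
            (p.1 * q.1, l p.1 q.2) ∈ Set.range (fun x : B => ((P x, x) : A × B)) ∧
            (p.1 * q.1, lam • (p.2 * q.2)) ∈
              Set.range (fun x : B => ((P x, x) : A × B)))) := by
  constructor
  · rintro h _ ⟨x, rfl⟩ _ ⟨y, rfl⟩
    obtain ⟨ha, hb, hc⟩ := h x y
    refine ⟨⟨r x (P y), ?_⟩, ⟨l (P x) y, ?_⟩, ⟨lam • (x * y), ?_⟩⟩
    · simp [← hb]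
    · simp [← ha]
    · simp only [map_smul]
      rw [← hc]
  · intro h x y
    obtain ⟨⟨z1, hz1⟩, ⟨z2, hz2⟩, ⟨z3, hz3⟩⟩ :=
      h (P x, x) ⟨x, rfl⟩ (P y, y) ⟨y, rfl⟩
    simp only [Prod.mk.injEq] at hz1 hz2 hz3
    obtain ⟨f1, e1⟩ := hz1
    obtain ⟨f2, e2⟩ := hz2
    obtain ⟨f3, e3⟩ := hz3
    subst e1 e2 e3
    exact ⟨f2.symm, f1.symm, by rw [← f3, map_smul]⟩
end

section
/- Let K be a field of characteristic 0, A an associative K-algebra, B an associative A-bimodule, λ ∈ K with λ ≠ 0, and P : B → A a relative averaging operator of weight λ. Then the operations on B defined by x ⊣_P y = x·P(y), x ⊢_P y = P(x)·y, and x ⊥_P y = λ·xy make B a triassociative algebra (i.e. they satisfy all eleven triassociative axioms). -/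
/-- a relative averaging operator `P` of weight `lam ≠ 0` induces a
triassociative algebra structure on `B` via `x ⊣_P y = x·P(y)`, `x ⊢_P y = P(x)·y`,
`x ⊥_P y = lam·xy`. -/
theorem relative_averaging_induces_triassociative
    {K A B : Type*} [Field K] [CharZero K]
    [NonUnitalRing A] [Module K A] [IsScalarTower K A A] [SMulCommClass K A A]
    [NonUnitalRing B] [Module K B] [IsScalarTower K B B] [SMulCommClass K B B]
    (l : A →ₗ[K] B →ₗ[K] B) (r : B →ₗ[K] A →ₗ[K] B)
    -- B is an associative A-bimodule:
    (h1 : ∀ a b : A, ∀ x : B, l (a * b) x = l a (l b x))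
    (h2 : ∀ a b : A, ∀ x : B, r (l a x) b = l a (r x b))
    (h3 : ∀ a b : A, ∀ x : B, r (r x a) b = r x (a * b))
    (h4 : ∀ a : A, ∀ x y : B, r (x * y) a = x * r y a)
    (h5 : ∀ a : A, ∀ x y : B, r x a * y = x * l a y)
    (h6 : ∀ a : A, ∀ x y : B, l a x * y = l a (x * y))
    (lam : K) (hlam : lam ≠ 0) (P : B →ₗ[K] A)
    (hP : ∀ x y : B, P x * P y = P (l (P x) y) ∧ P x * P y = P (r x (P y)) ∧
      P x * P y = lam • P (x * y)) :
    IsTriassociative (D := B)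
      (fun x y => r x (P y)) (fun x y => l (P x) y) (fun x y => lam • (x * y)) := by
  intro x y z
  dsimp only
  obtain ⟨hl, hr, hm⟩ := hP y z
  obtain ⟨hlx, hrx, hmx⟩ := hP x y
  refine ⟨?_, ?_, ?_, ?_, ?_, ?_, ?_, ?_, ?_, ?_, ?_⟩
  · rw [h3, ← hr]
  · rw [h3, ← hl]
  · rw [h2]
  · rw [← hrx, h1]
  · rw [← hlx, h1]
  · rw [h3, hm, map_smul, map_smul, map_smul]
  · rw [map_smul, LinearMap.smul_apply, h4]
  · rw [h5]
  · rw [h6, (l (P x)).map_smul]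
  · rw [map_smul, ← hmx, h1]
  · rw [smul_mul_assoc, mul_smul_comm, mul_assoc]
end

section
/- Let (D, ⊣, ⊢, ⊥) be a triassociative algebra over a field K of characteristic 0. Then the operations x ≺ y = x ⊣ y, x ≻ y = x ⊢ y, and x ⋎ y = −(x ⊥ y) make D a tridendriform algebra, i.e. they satisfy all seven tridendriform axioms. -/
/-- a triassociative algebra `(D, ⊣, ⊢, ⊥)` yields a tridendriform
algebra via `x ≺ y = x ⊣ y`, `x ≻ y = x ⊢ y`, `x ⋎ y = −(x ⊥ y)`. -/
theorem triassociative_gives_tridendriform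
    {K D : Type*} [Field K] [CharZero K] [AddCommGroup D] [Module K D]
    (dash vdash perp : D →ₗ[K] D →ₗ[K] D)
    (htri : ∀ x y z : D,
      dash (dash x y) z = dash x (dash y z) ∧
      dash (dash x y) z = dash x (vdash y z) ∧
      dash (vdash x y) z = vdash x (dash y z) ∧
      vdash (dash x y) z = vdash x (vdash y z) ∧
      vdash (vdash x y) z = vdash x (vdash y z) ∧
      dash (dash x y) z = dash x (perp y z) ∧
      dash (perp x y) z = perp x (dash y z) ∧
      perp (dash x y) z = perp x (vdash y z) ∧
      perp (vdash x y) z = vdash x (perp y z) ∧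
      vdash (perp x y) z = vdash x (vdash y z) ∧
      perp (perp x y) z = perp x (perp y z)) :
    ∀ x y z : D,
      dash (dash x y) z = dash x (dash y z + vdash y z + -perp y z) ∧
      dash (vdash x y) z = vdash x (dash y z) ∧
      vdash (dash x y + vdash x y + -perp x y) z = vdash x (vdash y z) ∧
      -perp (vdash x y) z = vdash x (-perp y z) ∧
      -perp (dash x y) z = -perp x (vdash y z) ∧
      dash (-perp x y) z = -perp x (dash y z) ∧
      -perp (-perp x y) z = -perp x (-perp y z) := by
  intro x y z
  obtain ⟨h1, h2, h3, h4, h5, h6, h7, h8, h9, h10, h11⟩ := htri x y z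
  refine ⟨?_, h3, ?_, ?_, ?_, ?_, ?_⟩
  · simp only [map_add, map_neg]
    rw [← h1, ← h2, ← h6]; abel
  · simp only [map_add, map_neg, LinearMap.add_apply, LinearMap.neg_apply]
    rw [h4, h5, h10]; abel
  · rw [map_neg, h9]
  · simp only [map_neg, LinearMap.neg_apply, h8]
  · simp only [map_neg, LinearMap.neg_apply, h7]
  · simp only [map_neg, LinearMap.neg_apply, h11, neg_neg]
end
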